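/- Let z : ℝ^{n₀} → ℝ be a continuous piecewise-affine function: there exist finitely many closed sets C₁, …, C_M covering ℝ^{n₀} and affine maps x ↦ a_m ⬝ x + b_m with z(x) = a_m ⬝ x + b_m on C_m. Suppose z is nonzero on every nonempty open subset of ℝ^{n₀} (i.e., z does not vanish identically on any open set). Then the zero set {x : z(x) = 0} has Lebesgue measure zero. -/
import Mathlib


open MeasureTheory

lemma hyperplane_null {n : ℕ} (a : Fin n → ℝ) (ha : a ≠ 0) (b : ℝ) :
    volume {x : Fin n → ℝ | (∑ i, a i * x i) + b = 0} = 0 := by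
  obtain ⟨j, hj⟩ : ∃ j, a j ≠ 0 := by
    by_contra h; push_neg at h; exact ha (funext h)
  set L : (Fin n → ℝ) →ₗ[ℝ] ℝ :=
    { toFun := fun x => ∑ i, a i * x i
      map_add' := by intro x y; simp [mul_add, Finset.sum_add_distrib]
      map_smul' := by intro c x; simp [Finset.mul_sum, mul_comm, mul_left_comm] }
  set x₀ : Fin n → ℝ := fun i => if i = j then -b / a j else 0
  have hx₀ : L x₀ = -b := by
    simp only [L, x₀, LinearMap.coe_mk, AddHom.coe_mk, mul_ite, mul_zero]
    rw [Finset.sum_ite_eq' Finset.univ j]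
    simp [hj, mul_div_cancel₀]
  have hset : {x : Fin n → ℝ | (∑ i, a i * x i) + b = 0}
      = (AffineSubspace.mk' x₀ (LinearMap.ker L) : Set _) := by
    ext x
    have : L x = ∑ i, a i * x i := rfl
    simp only [Set.mem_setOf_eq, SetLike.mem_coe, AffineSubspace.mem_mk',
      LinearMap.mem_ker, vsub_eq_sub, map_sub, hx₀, ← this]
    constructor <;> intro h <;> linarith
  rw [hset]
  refine Measure.addHaar_affineSubspace _ _ ?_
  intro h
  have hker : LinearMap.ker L = ⊤ := by
    rw [← AffineSubspace.direction_mk' x₀ (LinearMap.ker L), h, AffineSubspace.direction_top]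
  have hL0 : L = 0 := LinearMap.ker_eq_top.mp hker
  have : L (Pi.single j 1) = a j := by
    simp [L, Pi.single_apply, mul_ite, Finset.sum_ite_eq' Finset.univ j]
  rw [hL0] at this
  simp at this
  exact hj this.symm

theorem piecewise_affine_zero_set_null {n₀ M : ℕ}
    (z : (Fin n₀ → ℝ) → ℝ) (hz : Continuous z)
    (C : Fin M → Set (Fin n₀ → ℝ)) (hclosed : ∀ m, IsClosed (C m))
    (hcover : (⋃ m, C m) = Set.univ)
    (a : Fin M → Fin n₀ → ℝ) (b : Fin M → ℝ)
    (haff : ∀ m, ∀ x ∈ C m, z x = (∑ i, a m i * x i) + b m)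
    (hnv : ∀ U : Set (Fin n₀ → ℝ), IsOpen U → U.Nonempty → ∃ x ∈ U, z x ≠ 0) :
    volume {x | z x = 0} = 0 := by
  classical
  set B : Set (Fin n₀ → ℝ) :=
    ⋃ m ∈ {m : Fin M | a m ≠ 0}, {x | (∑ i, a m i * x i) + b m = 0} with hB
  have hBnull : volume B = 0 := by
    refine measure_biUnion_null_iff ((Set.to_countable _)) |>.mpr ?_
    intro m hm
    exact hyperplane_null (a m) hm (b m)
  refine measure_mono_null ?_ hBnull
  intro x hx
  by_contra hxB
  -- every piece containing x is fully degenerate: a m = 0 and b m = 0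
  have hdeg : ∀ m, x ∈ C m → a m = 0 ∧ b m = 0 := by
    intro m hxm
    have hzero : (∑ i, a m i * x i) + b m = 0 := by
      rw [← haff m x hxm]; exact hx
    by_cases ham : a m = 0
    · refine ⟨ham, ?_⟩
      simpa [ham] using hzero
    · exact absurd (Set.mem_biUnion (show m ∈ {m : Fin M | a m ≠ 0} from ham) hzero) hxB
  -- the union of pieces not containing x is closed; take its complement
  set U : Set (Fin n₀ → ℝ) := (⋃ m ∈ {m : Fin M | x ∉ C m}, C m)ᶜ with hU
  have hUopen : IsOpen U := by
    apply isOpen_compl_iff.mpr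
    exact Set.Finite.isClosed_biUnion (Set.toFinite _) (fun m _ => hclosed m)
  have hxU : x ∈ U := by
    simp only [U, Set.mem_compl_iff, Set.mem_iUnion]
    rintro ⟨m, hm, hxm⟩
    exact hm hxm
  obtain ⟨y, hyU, hyz⟩ := hnv U hUopen ⟨x, hxU⟩
  -- y lies in some piece; that piece contains x (else y ∉ U), so it's degenerate
  have hy : y ∈ ⋃ m, C m := hcover ▸ Set.mem_univ y
  obtain ⟨m, hym⟩ := Set.mem_iUnion.mp hy
  have hxm : x ∈ C m := by
    by_contra hxm
    exact hyU (Set.mem_biUnion (show m ∈ {m : Fin M | x ∉ C m} from hxm) hym)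
  obtain ⟨ha0, hb0⟩ := hdeg m hxm
  have : z y = 0 := by
    rw [haff m y hym, ha0, hb0]; simp
  exact hyz this
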